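/- arXiv:1812.05495 — 3 statements merged into one kernel-verified Lean document; each statement's English description precedes it below -/
import Mathlib

section
/- For every positive integer k and every real x ≥ 0, the k-fold convolution power of f(x) = e^{-|x|} satisfies f^{*k}(x) ≤ 2^{k-1} e^{-x} ∑_{m=0}^{k-1} x^{k-1-m}/(k-1-m)!. -/
open MeasureTheory Finset

section Aux

open Real Set

noncomputable def convS (k : ℕ) (x : ℝ) : ℝ :=
  ∑ j ∈ Finset.range k, x ^ j / (Nat.factorial j)

lemma convS_nonneg (k : ℕ) (x : ℝ) (hx : 0 ≤ x) : 0 ≤ convS k x := by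
  unfold convS; positivity

lemma convS_mono (k l : ℕ) (h : k ≤ l) (x : ℝ) (hx : 0 ≤ x) : convS k x ≤ convS l x := by
  unfold convS
  exact Finset.sum_le_sum_of_subset_of_nonneg (Finset.range_subset_range.2 h)
    (fun i _ _ => by positivity)

lemma pow_div_fact_le_exp (x : ℝ) (hx : 0 ≤ x) (j : ℕ) :
    x ^ j / (Nat.factorial j) ≤ Real.exp x :=
  calc x ^ j / (Nat.factorial j)
      ≤ ∑ i ∈ Finset.range (j+1), x ^ i / (Nat.factorial i) :=
        Finset.single_le_sum (f := fun i => x ^ i / (Nat.factorial i))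
          (fun i _ => by positivity) (Finset.self_mem_range_succ j)
    _ ≤ Real.exp x := Real.sum_le_exp_of_nonneg hx _

lemma convS_le_exp (k : ℕ) (x : ℝ) (hx : 0 ≤ x) : convS k x ≤ Real.exp x :=
  Real.sum_le_exp_of_nonneg hx k

theorem my_integral_comp_neg (f : ℝ → ℝ) : (∫ x : ℝ, f (-x)) = ∫ x : ℝ, f x := by
  have := (Homeomorph.neg ℝ).measurableEmbedding.integral_map (μ := (volume : Measure ℝ)) f
  rw [show ⇑(Homeomorph.neg ℝ) = (Neg.neg : ℝ → ℝ) from rfl,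
    Measure.map_neg_eq_self (volume : Measure ℝ)] at this
  exact this.symm

theorem my_integrable_exp_neg_abs : Integrable (fun y : ℝ => exp (-|y|)) := by
  have h1 : IntegrableOn (fun y : ℝ => exp (-|y|)) (Ioi 0) := by
    refine (exp_neg_integrableOn_Ioi 0 (b := 1) one_pos).congr_fun
      (fun y hy => ?_) measurableSet_Ioi
    rw [abs_of_pos hy]; ring_nf
  have h2 : IntegrableOn (fun y : ℝ => exp (-|y|)) (Iic 0) := by
    rw [← Measure.map_neg_eq_self (volume : Measure ℝ)]
    have m : MeasurableEmbedding fun x : ℝ => -x := (Homeomorph.neg ℝ).measurableEmbedding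
    rw [m.integrableOn_map_iff]
    simp_rw [Function.comp_def, abs_neg, neg_preimage, neg_Iic, neg_zero]
    exact Iff.mpr integrableOn_Ici_iff_integrableOn_Ioi h1
  rw [← integrableOn_univ, ← Set.Iic_union_Ioi (a := (0:ℝ))]
  exact h2.union h1

theorem my_int_pow_exp (j : ℕ) :
    ∫ t in Ioi (0:ℝ), t ^ j * exp (-(2 * t)) = Nat.factorial j / 2 ^ (j + 1) := by
  have h := Real.integral_rpow_mul_exp_neg_mul_Ioi (a := (j:ℝ) + 1) (r := 2)
    (by positivity) (by norm_num)
  rw [show ((j:ℝ) + 1 - 1) = (j:ℝ) by ring] at h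
  have e1 : ∀ t ∈ Ioi (0:ℝ), t ^ ((j:ℝ)) * exp (-(2 * t)) = t ^ j * exp (-(2*t)) := by
    intro t ht; rw [Real.rpow_natCast]
  rw [setIntegral_congr_fun measurableSet_Ioi e1] at h
  rw [h, Real.Gamma_nat_eq_factorial,
    show ((j:ℝ) + 1) = ((j + 1 : ℕ) : ℝ) by push_cast; ring, Real.rpow_natCast]
  rw [div_pow, one_pow]
  ring

theorem my_int_on_pow_exp (n : ℕ) :
    IntegrableOn (fun t : ℝ => t ^ n * exp (-(2 * t))) (Ioi 0) := by
  refine (((exp_neg_integrableOn_Ioi 0 (b := 1) one_pos)).const_mul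
    (Nat.factorial n : ℝ)).mono' ?_ ?_
  · exact ((continuous_pow n).mul
      (Real.continuous_exp.comp (continuous_const.mul continuous_id).neg)).aestronglyMeasurable
  · filter_upwards [ae_restrict_mem measurableSet_Ioi] with t ht
    have ht0 : (0:ℝ) ≤ t := le_of_lt ht
    have h1 : t ^ n ≤ (Nat.factorial n : ℝ) * exp t := by
      have := pow_div_fact_le_exp t ht0 n
      have hf : (0:ℝ) < (Nat.factorial n : ℝ) := by positivity
      rw [div_le_iff₀ hf] at this
      linarith [this]
    rw [Real.norm_eq_abs, abs_of_nonneg (by positivity)]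
    calc t ^ n * exp (-(2 * t)) ≤ (Nat.factorial n : ℝ) * exp t * exp (-(2 * t)) := by
          apply mul_le_mul_of_nonneg_right h1 (Real.exp_nonneg _)
      _ = (Nat.factorial n : ℝ) * exp (-1 * t) := by
          rw [mul_assoc, ← Real.exp_add]; ring_nf
    
lemma my_geo : ∀ k : ℕ, ∑ j ∈ Finset.range k, ((1:ℝ)/2) ^ (j+1) = 1 - (1/2) ^ k := by
  intro k
  induction k with
  | zero => simp
  | succ n ih => rw [Finset.sum_range_succ, ih]; ring

/-- the key algebraic inequality used for the left tail -/
lemma my_alg (x : ℝ) (hx : 0 ≤ x) (k : ℕ) :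
    (∑ j ∈ Finset.range k, ∑ a ∈ Finset.range (j+1),
        x ^ a / (Nat.factorial a) * ((1:ℝ)/2) ^ (j - a + 1))
      + ∑ a ∈ Finset.range k, x ^ a / (Nat.factorial a) * ((1:ℝ)/2) ^ (k - a)
    ≤ ∑ a ∈ Finset.range k, x ^ a / (Nat.factorial a) := by
  induction k with
  | zero => simp
  | succ n ih =>
    have hD : ∑ a ∈ Finset.range (n+1), x ^ a / (Nat.factorial a) * ((1:ℝ)/2) ^ (n + 1 - a)
        = (1/2) * ((∑ a ∈ Finset.range n, x ^ a / (Nat.factorial a) * ((1:ℝ)/2) ^ (n - a))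
            + x ^ n / (Nat.factorial n)) := by
      rw [Finset.sum_range_succ]
      have e : ∀ a ∈ Finset.range n,
          x ^ a / (Nat.factorial a) * ((1:ℝ)/2) ^ (n + 1 - a)
            = (1/2) * (x ^ a / (Nat.factorial a) * ((1:ℝ)/2) ^ (n - a)) := by
        intro a ha
        have ha' : a < n := Finset.mem_range.1 ha
        rw [show n + 1 - a = (n - a) + 1 by omega, pow_succ]; ring
      rw [Finset.sum_congr rfl e, ← Finset.mul_sum, show n + 1 - n = 1 by omega]
      ring
    have hE : ∑ a ∈ Finset.range (n+1), x ^ a / (Nat.factorial a) * ((1:ℝ)/2) ^ (n - a + 1)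
        = ∑ a ∈ Finset.range (n+1), x ^ a / (Nat.factorial a) * ((1:ℝ)/2) ^ (n + 1 - a) := by
      refine Finset.sum_congr rfl fun a ha => ?_
      have ha' : a < n + 1 := Finset.mem_range.1 ha
      rw [show n - a + 1 = n + 1 - a by omega]
    rw [Finset.sum_range_succ (f := fun j => ∑ a ∈ Finset.range (j+1),
        x ^ a / (Nat.factorial a) * ((1:ℝ)/2) ^ (j - a + 1)),
      Finset.sum_range_succ (f := fun a => x ^ a / (Nat.factorial a)), hE, hD]
    have hDnn : 0 ≤ ∑ a ∈ Finset.range n, x ^ a / (Nat.factorial a) * ((1:ℝ)/2) ^ (n - a) := by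
      positivity
    linarith [ih]

end Aux

section Core

open Real Set

/-- integrability of each summand -/
lemma my_integrable_phi (x : ℝ) (j : ℕ) :
    Integrable (fun y : ℝ => |x - y| ^ j / (Nat.factorial j) * (exp (-|x - y|) * exp (-|y|))) := by
  refine my_integrable_exp_neg_abs.mono' ?_ ?_
  · apply Continuous.aestronglyMeasurable
    have h1 : Continuous fun y : ℝ => |x - y| := (continuous_const.sub continuous_id).abs
    exact ((h1.pow j).div_const _).mul
      ((Real.continuous_exp.comp h1.neg).mul (Real.continuous_exp.comp continuous_abs.neg))
  · refine ae_of_all _ fun y => ?_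
    rw [Real.norm_eq_abs, abs_of_nonneg (by positivity)]
    have h1 : |x - y| ^ j / (Nat.factorial j) * exp (-|x - y|) ≤ 1 := by
      have h2 := pow_div_fact_le_exp |x - y| (abs_nonneg _) j
      calc |x - y| ^ j / (Nat.factorial j) * exp (-|x - y|)
          ≤ exp |x - y| * exp (-|x - y|) :=
            mul_le_mul_of_nonneg_right h2 (Real.exp_nonneg _)
        _ = 1 := by rw [← Real.exp_add]; simp
    calc |x - y| ^ j / (Nat.factorial j) * (exp (-|x - y|) * exp (-|y|))
        = (|x - y| ^ j / (Nat.factorial j) * exp (-|x - y|)) * exp (-|y|) := by ring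
      _ ≤ 1 * exp (-|y|) := mul_le_mul_of_nonneg_right h1 (Real.exp_nonneg _)
      _ = exp (-|y|) := one_mul _

lemma my_integrable_Phi (k : ℕ) (x : ℝ) :
    Integrable (fun y : ℝ => exp (-|x - y|) * convS k |x - y| * exp (-|y|)) := by
  have h : (fun y : ℝ => exp (-|x - y|) * convS k |x - y| * exp (-|y|))
      = fun y => ∑ j ∈ Finset.range k,
          |x - y| ^ j / (Nat.factorial j) * (exp (-|x - y|) * exp (-|y|)) := by
    funext y
    unfold convS
    rw [Finset.mul_sum, Finset.sum_mul]
    exact Finset.sum_congr rfl fun j _ => by ring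
  rw [h]
  exact integrable_finset_sum _ fun j _ => my_integrable_phi x j

set_option maxHeartbeats 1000000 in
/-- The core convolution estimate. -/
theorem my_core (k : ℕ) (x : ℝ) (hx : 0 ≤ x) :
    (∫ y : ℝ, exp (-|x - y|) * convS k |x - y| * exp (-|y|))
      ≤ 2 * exp (-x) * convS (k+1) x := by
  set φ : ℕ → ℝ → ℝ :=
    fun j y => |x - y| ^ j / (Nat.factorial j) * (exp (-|x - y|) * exp (-|y|)) with hφdef
  have hφint : ∀ j, Integrable (φ j) := fun j => my_integrable_phi x j
  have hsum : (fun y : ℝ => exp (-|x - y|) * convS k |x - y| * exp (-|y|))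
      = fun y => ∑ j ∈ Finset.range k, φ j y := by
    funext y
    unfold convS
    rw [Finset.mul_sum, Finset.sum_mul]
    exact Finset.sum_congr rfl fun j _ => by ring
  have hΦint : Integrable (fun y => ∑ j ∈ Finset.range k, φ j y) :=
    integrable_finset_sum _ fun j _ => hφint j
  rw [hsum]
  -- split the line
  have hsplit : (∫ y, ∑ j ∈ Finset.range k, φ j y)
      = (∫ y in Iic 0, ∑ j ∈ Finset.range k, φ j y)
        + ((∫ y in Ioc 0 x, ∑ j ∈ Finset.range k, φ j y)
          + ∫ y in Ioi x, ∑ j ∈ Finset.range k, φ j y) := by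
    rw [← intervalIntegral.integral_Iic_add_Ioi hΦint.integrableOn hΦint.integrableOn]
    congr 1
    rw [← Set.Ioc_union_Ioi_eq_Ioi hx,
      setIntegral_union (Set.Ioc_disjoint_Ioi le_rfl) measurableSet_Ioi
        hΦint.integrableOn hΦint.integrableOn]
  -- left piece
  have hLj : ∀ j, (∫ y in Iic 0, φ j y)
      = exp (-x) * ∑ a ∈ Finset.range (j+1),
          x ^ a / (Nat.factorial a) * ((1:ℝ)/2) ^ (j - a + 1) := by
    intro j
    have e1 : ∀ y ∈ Iic (0:ℝ), φ j y
        = exp (-x) / (Nat.factorial j) * ((x + -y) ^ j * exp (-(2 * (-y)))) := by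
      intro y hy
      have hy0 : y ≤ 0 := hy
      have hxy : (0:ℝ) ≤ x - y := by linarith
      simp only [hφdef, abs_of_nonneg hxy, abs_of_nonpos hy0]
      rw [show exp (-(x - y)) * exp (- -y) = exp (-x) * exp (-(2 * (-y))) by
        rw [← Real.exp_add, ← Real.exp_add]; ring_nf]
      ring
    rw [setIntegral_congr_fun measurableSet_Iic e1, integral_const_mul,
      integral_comp_neg_Iic 0 (fun t => (x + t) ^ j * exp (-(2 * t))), neg_zero]
    have e2 : ∀ t ∈ Ioi (0:ℝ), (x + t) ^ j * exp (-(2 * t))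
        = ∑ a ∈ Finset.range (j+1),
            (x ^ a * (j.choose a : ℝ)) * (t ^ (j - a) * exp (-(2 * t))) := by
      intro t _
      rw [add_pow, Finset.sum_mul]
      exact Finset.sum_congr rfl fun a _ => by ring
    rw [setIntegral_congr_fun measurableSet_Ioi e2,
      integral_finset_sum _ fun a _ => ((my_int_on_pow_exp (j - a)).const_mul _)]
    have e3 : ∀ a ∈ Finset.range (j+1),
        (∫ t in Ioi (0:ℝ), (x ^ a * (j.choose a : ℝ)) * (t ^ (j - a) * exp (-(2 * t))))
          = (x ^ a * (j.choose a : ℝ)) * ((Nat.factorial (j - a) : ℝ) / 2 ^ (j - a + 1)) := by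
      intro a _
      rw [integral_const_mul, my_int_pow_exp]
    rw [Finset.sum_congr rfl e3, Finset.mul_sum, Finset.mul_sum]
    refine Finset.sum_congr rfl fun a ha => ?_
    have haj : a ≤ j := Nat.lt_succ_iff.1 (Finset.mem_range.1 ha)
    have hfac : ((j.choose a : ℝ)) * (Nat.factorial a) * (Nat.factorial (j - a))
        = (Nat.factorial j) := by
      exact_mod_cast Nat.choose_mul_factorial_mul_factorial haj
    have hfa : (0:ℝ) < (Nat.factorial a : ℝ) := by positivity
    have hfj : (0:ℝ) < (Nat.factorial j : ℝ) := by positivity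
    rw [div_pow, one_pow]
    field_simp
    linear_combination (x ^ a) * hfac
  have hleft : (∫ y in Iic 0, ∑ j ∈ Finset.range k, φ j y)
      ≤ exp (-x) * convS k x := by
    rw [integral_finset_sum _ fun j _ => (hφint j).integrableOn]
    rw [Finset.sum_congr rfl fun j _ => hLj j, ← Finset.mul_sum]
    have halg := my_alg x hx k
    have hDnn : 0 ≤ ∑ a ∈ Finset.range k, x ^ a / (Nat.factorial a) * ((1:ℝ)/2) ^ (k - a) := by
      positivity
    have : (∑ j ∈ Finset.range k, ∑ a ∈ Finset.range (j+1),
        x ^ a / (Nat.factorial a) * ((1:ℝ)/2) ^ (j - a + 1)) ≤ convS k x := by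
      unfold convS; linarith
    exact mul_le_mul_of_nonneg_left this (Real.exp_nonneg _)
  -- middle piece
  have hMj : ∀ j, (∫ y in Ioc 0 x, φ j y)
      = exp (-x) * (x ^ (j+1) / (Nat.factorial (j+1))) := by
    intro j
    have e1 : ∀ y ∈ Ioc (0:ℝ) x, φ j y
        = exp (-x) / (Nat.factorial j) * (x - y) ^ j := by
      intro y hy
      have hy0 : 0 < y := hy.1
      have hyx : y ≤ x := hy.2
      have hxy : (0:ℝ) ≤ x - y := by linarith
      simp only [hφdef, abs_of_nonneg hxy, abs_of_pos hy0]
      rw [show exp (-(x - y)) * exp (-y) = exp (-x) by rw [← Real.exp_add]; ring_nf]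
      ring
    rw [setIntegral_congr_fun measurableSet_Ioc e1, integral_const_mul,
      ← intervalIntegral.integral_of_le hx,
      intervalIntegral.integral_comp_sub_left (fun u => u ^ j) x]
    rw [sub_self, sub_zero, integral_pow]
    rw [zero_pow (Nat.succ_ne_zero j), sub_zero]
    rw [Nat.factorial_succ]
    push_cast
    have hfj : (0:ℝ) < (Nat.factorial j : ℝ) := by positivity
    have hj1 : (0:ℝ) < (j:ℝ) + 1 := by positivity
    rw [div_mul_div_comm, mul_div_assoc]
    congr 1
    rw [mul_comm ((Nat.factorial j : ℝ)) _]
  have hmid : (∫ y in Ioc 0 x, ∑ j ∈ Finset.range k, φ j y)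
      = exp (-x) * (convS (k+1) x - 1) := by
    rw [integral_finset_sum _ fun j _ => (hφint j).integrableOn]
    rw [Finset.sum_congr rfl fun j _ => hMj j, ← Finset.mul_sum]
    congr 1
    unfold convS
    rw [Finset.sum_range_succ' (fun i => x ^ i / (Nat.factorial i)) k]
    simp
  -- right piece
  have hRj : ∀ j, (∫ y in Ioi x, φ j y) = exp (-x) * ((1:ℝ)/2) ^ (j+1) := by
    intro j
    have e1 : ∀ y ∈ Ioi x, φ j y
        = exp (-x) / (Nat.factorial j) * ((y - x) ^ j * exp (-(2 * (y - x)))) := by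
      intro y hy
      have hxy : x < y := hy
      have hy0 : 0 < y := lt_of_le_of_lt hx hxy
      have h1 : x - y ≤ 0 := by linarith
      simp only [hφdef, abs_of_nonpos h1, abs_of_pos hy0, neg_sub]
      rw [show exp (x - y) * exp (-y) = exp (-x) * exp (-(2 * (y - x))) by
        rw [← Real.exp_add, ← Real.exp_add]; ring_nf]
      ring
    rw [setIntegral_congr_fun measurableSet_Ioi e1, integral_const_mul]
    have hshift : (∫ y in Ioi x, (y - x) ^ j * exp (-(2 * (y - x))))
        = ∫ t in Ioi (0:ℝ), t ^ j * exp (-(2 * t)) := by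
      have h := (measurePreserving_add_right (volume : Measure ℝ) x).setIntegral_preimage_emb
        (measurableEmbedding_addRight x)
        (fun y => (y - x) ^ j * exp (-(2 * (y - x)))) (Ioi x)
      have hpre : (fun t : ℝ => t + x) ⁻¹' Set.Ioi x = Set.Ioi (0:ℝ) := by
        ext t; simp [lt_add_iff_pos_left]
      rw [hpre] at h
      rw [← h]
      refine setIntegral_congr_fun measurableSet_Ioi fun t _ => ?_
      simp [add_sub_cancel_right]
    rw [hshift, my_int_pow_exp]
    have hfj : (0:ℝ) < (Nat.factorial j : ℝ) := by positivity
    rw [div_pow, one_pow]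
    field_simp
  have hright : (∫ y in Ioi x, ∑ j ∈ Finset.range k, φ j y) ≤ exp (-x) := by
    rw [integral_finset_sum _ fun j _ => (hφint j).integrableOn]
    rw [Finset.sum_congr rfl fun j _ => hRj j, ← Finset.mul_sum, my_geo]
    have h1 : (1:ℝ) - (1/2) ^ k ≤ 1 := by
      have : (0:ℝ) ≤ (1/2) ^ k := by positivity
      linarith
    calc exp (-x) * (1 - (1/2) ^ k) ≤ exp (-x) * 1 :=
          mul_le_mul_of_nonneg_left h1 (Real.exp_nonneg _)
      _ = exp (-x) := mul_one _
  -- combine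
  rw [hsplit]
  have hmono : convS k x ≤ convS (k+1) x := convS_mono k (k+1) (Nat.le_succ k) x hx
  have hcnn : (0:ℝ) ≤ convS (k+1) x := convS_nonneg _ _ hx
  have hexp : (0:ℝ) ≤ exp (-x) := Real.exp_nonneg _
  nlinarith [hleft, hmid, hright, mul_le_mul_of_nonneg_left hmono hexp]

end Core

section Main

open Real

theorem my_main
    (F : ℕ → ℝ → ℝ)
    (hF1 : F 1 = fun x => Real.exp (-|x|))
    (hFsucc : ∀ k : ℕ, 1 ≤ k →
      F (k + 1) = fun x => ∫ y : ℝ, F k (x - y) * Real.exp (-|y|)) :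
    ∀ k : ℕ, 1 ≤ k → ∀ x : ℝ, F k x ≤ 2 ^ (k - 1) * Real.exp (-|x|) * convS k |x| := by
  have hnn : ∀ k : ℕ, 1 ≤ k → ∀ x : ℝ, 0 ≤ F k x := by
    intro k hk
    induction k, hk using Nat.le_induction with
    | base => intro x; rw [hF1]; exact (Real.exp_pos _).le
    | succ n hn ih =>
      intro x
      rw [hFsucc n hn]
      exact integral_nonneg fun y => mul_nonneg (ih _) (Real.exp_nonneg _)
  have heven : ∀ k : ℕ, 1 ≤ k → ∀ x : ℝ, F k (-x) = F k x := by
    intro k hk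
    induction k, hk using Nat.le_induction with
    | base => intro x; rw [hF1]; simp
    | succ n hn ih =>
      intro x
      rw [hFsucc n hn]
      calc (∫ y : ℝ, F n (-x - y) * Real.exp (-|y|))
          = ∫ y : ℝ, F n (x - -y) * Real.exp (-|(-y)|) := by
            refine integral_congr_ae (Filter.EventuallyEq.of_eq (funext fun y => ?_))
            rw [abs_neg, show x - -y = x + y by ring, show (-x - y) = -(x + y) by ring, ih]
        _ = ∫ y : ℝ, F n (x - y) * Real.exp (-|y|) :=
            my_integral_comp_neg (fun z : ℝ => F n (x - z) * Real.exp (-|z|))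
  have hstep : ∀ n : ℕ, 1 ≤ n →
      (∀ z : ℝ, F n z ≤ 2 ^ (n - 1) * Real.exp (-|z|) * convS n |z|) →
      ∀ x : ℝ, 0 ≤ x → F (n+1) x ≤ 2 ^ n * Real.exp (-x) * convS (n+1) x := by
    intro n hn ih x hx
    rw [hFsucc n hn]
    have hΦ := my_integrable_Phi n x
    calc (∫ y : ℝ, F n (x - y) * Real.exp (-|y|))
        ≤ ∫ y : ℝ, 2 ^ (n - 1) *
            (Real.exp (-|x - y|) * convS n |x - y| * Real.exp (-|y|)) := by
          apply integral_mono_of_nonneg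
          · exact ae_of_all _ fun y => mul_nonneg (hnn n hn _) (Real.exp_nonneg _)
          · exact hΦ.const_mul _
          · refine ae_of_all _ fun y => ?_
            calc F n (x - y) * Real.exp (-|y|)
                ≤ (2 ^ (n - 1) * Real.exp (-|x - y|) * convS n |x - y|) * Real.exp (-|y|) :=
                  mul_le_mul_of_nonneg_right (ih _) (Real.exp_nonneg _)
              _ = 2 ^ (n - 1) *
                  (Real.exp (-|x - y|) * convS n |x - y| * Real.exp (-|y|)) := by ring
      _ = 2 ^ (n - 1) *
            ∫ y : ℝ, Real.exp (-|x - y|) * convS n |x - y| * Real.exp (-|y|) :=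
          integral_const_mul _ _
      _ ≤ 2 ^ (n - 1) * (2 * Real.exp (-x) * convS (n+1) x) := by
          refine mul_le_mul_of_nonneg_left (my_core n x hx) (by positivity)
      _ = 2 ^ n * Real.exp (-x) * convS (n+1) x := by
          rw [show (2:ℝ) ^ n = 2 ^ (n-1) * 2 by
            rw [← pow_succ]; congr 1; omega]
          ring
  intro k hk
  induction k, hk using Nat.le_induction with
  | base =>
    intro x
    rw [hF1]
    unfold convS
    simp
  | succ n hn ih =>
    intro x
    rcases le_or_gt 0 x with h | h
    · have := hstep n hn ih x h
      rw [abs_of_nonneg h]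
      simpa using this
    · have h' : 0 ≤ -x := by linarith
      have hb := hstep n hn ih (-x) h'
      rw [← heven (n+1) (by omega) x] at *
      rw [abs_of_neg h]
      simpa using hb

end Main

/-- For `k ≥ 1` and `x ≥ 0`, the `k`-fold convolution power of `f x = exp (-|x|)`
satisfies `f^{*k}(x) ≤ 2^{k-1} e^{-x} ∑_{m=0}^{k-1} x^{k-1-m}/(k-1-m)!`. -/
theorem conv_power_exp_neg_abs_bound
    (F : ℕ → ℝ → ℝ)
    (hF1 : F 1 = fun x => Real.exp (-|x|))
    (hFsucc : ∀ k : ℕ, 1 ≤ k →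
      F (k + 1) = fun x => ∫ y : ℝ, F k (x - y) * Real.exp (-|y|))
    (k : ℕ) (hk : 1 ≤ k) (x : ℝ) (hx : 0 ≤ x) :
    F k x ≤ 2 ^ (k - 1) * Real.exp (-x) *
      ∑ m ∈ Finset.range k, x ^ (k - 1 - m) / Nat.factorial (k - 1 - m) := by
  have h := my_main F hF1 hFsucc k hk x
  rw [abs_of_nonneg hx] at h
  rwa [show (∑ m ∈ Finset.range k, x ^ (k - 1 - m) / (Nat.factorial (k - 1 - m) : ℝ))
    = convS k x from (Finset.sum_range_reflect (fun j => x ^ j / (Nat.factorial j : ℝ)) k).trans rfl]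
end

section
/- Fix l > 0 and ε > 0, and set c(l,ε) = l·e^{1/l}·2(1+ε)/ε. Then for every integer k ≥ 0, every N ≥ 1, and all a, b ∈ {1,…,N}, the path sum Path^{(l)}_{k+1}(a,b) := ∑_{x₁,…,x_k = 1}^{N} exp(-(1/l)(|a-x₁| + |x₁-x₂| + ⋯ + |x_k - b|)) satisfies Path^{(l)}_{k+1}(a,b) ≤ c(l,ε)^{k+1} · e^{-|a-b|/((1+ε)l)}. -/
open Finset

private lemma geom_aux {r : ℝ} (hr0 : 0 ≤ r) (hr1 : r < 1) (n : ℕ) :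
    ∑ j ∈ range n, r ^ j ≤ 1 / (1 - r) := by
  have h1 : 0 < 1 - r := by linarith
  rw [geom_sum_eq hr1.ne n]
  have e : (r ^ n - 1) / (r - 1) = (1 - r ^ n) / (1 - r) := by
    rw [← neg_div_neg_eq]; ring_nf
  rw [e, div_le_div_iff₀ h1 h1]
  have : 0 ≤ r ^ n := pow_nonneg hr0 n
  nlinarith

private lemma sum_exp_abs_le (t : ℝ) (ht : 0 < t) (N a : ℕ) (ha : 1 ≤ a) (ha' : a ≤ N) :
    ∑ x ∈ Icc 1 N, Real.exp (-t * |(a:ℝ) - x|) ≤ 2 / (1 - Real.exp (-t)) := by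
  set r := Real.exp (-t) with hr
  have hr0 : 0 ≤ r := (Real.exp_pos _).le
  have hr1 : r < 1 := by rw [hr, Real.exp_lt_one_iff]; linarith
  have hsplit : Icc 1 N = Icc 1 a ∪ Ioc a N := by
    ext x; simp only [mem_Icc, mem_Ioc, mem_union]; omega
  have hdisj : Disjoint (Icc 1 a) (Ioc a N) := by
    rw [Finset.disjoint_left]
    intro x hx hx'
    simp only [mem_Icc, mem_Ioc] at hx hx'
    omega
  rw [hsplit, Finset.sum_union hdisj]
  have h1 : ∑ x ∈ Icc 1 a, Real.exp (-t * |(a:ℝ) - x|) = ∑ j ∈ range a, r ^ j := by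
    apply Finset.sum_nbij' (fun x => a - x) (fun j => a - j)
    · intro x hx; simp only [mem_Icc] at hx; simp only [mem_range]; omega
    · intro j hj; simp only [mem_range] at hj; simp only [mem_Icc]; omega
    · intro x hx; simp only [mem_Icc] at hx; omega
    · intro j hj; simp only [mem_range] at hj; omega
    · intro x hx
      simp only [mem_Icc] at hx
      rw [hr, ← Real.exp_nat_mul]
      congr 1
      have hxa : (x:ℝ) ≤ a := by exact_mod_cast hx.2
      have e1 : |(a:ℝ) - x| = (a:ℝ) - x := abs_of_nonneg (by linarith)
      have e2 : ((a - x : ℕ) : ℝ) = (a:ℝ) - x := by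
        push_cast [Nat.cast_sub hx.2]; ring
      rw [e1, e2]; ring
  have h2 : ∑ x ∈ Ioc a N, Real.exp (-t * |(a:ℝ) - x|) ≤ ∑ j ∈ range N, r ^ j := by
    have e : ∑ x ∈ Ioc a N, Real.exp (-t * |(a:ℝ) - x|)
        = ∑ j ∈ range (N - a), r ^ (j + 1) := by
      apply Finset.sum_nbij' (fun x => x - a - 1) (fun j => j + a + 1)
      · intro x hx; simp only [mem_Ioc] at hx; simp only [mem_range]; omega
      · intro j hj; simp only [mem_range] at hj; simp only [mem_Ioc]; omega
      · intro x hx; simp only [mem_Ioc] at hx; omega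
      · intro j hj; simp only [mem_range] at hj; omega
      · intro x hx
        simp only [mem_Ioc] at hx
        rw [hr, ← Real.exp_nat_mul]
        congr 1
        have hxa : (a:ℝ) < x := by exact_mod_cast hx.1
        have e1 : |(a:ℝ) - x| = (x:ℝ) - a := by
          rw [abs_sub_comm]; exact abs_of_nonneg (by linarith)
        have e2 : ((x - a - 1 + 1 : ℕ) : ℝ) = (x:ℝ) - a := by
          have h4 := hx.1
          push_cast [Nat.sub_sub, Nat.cast_sub (by omega : a + 1 ≤ x)]; ring
        rw [e1, e2]; ring
    rw [e]
    calc ∑ j ∈ range (N - a), r ^ (j + 1) ≤ ∑ j ∈ range (N - a), r ^ j := by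
          apply Finset.sum_le_sum
          intro j _
          exact pow_le_pow_of_le_one hr0 hr1.le (Nat.le_succ j)
      _ ≤ ∑ j ∈ range N, r ^ j := by
          apply Finset.sum_le_sum_of_subset_of_nonneg
          · intro j hj; simp only [mem_range] at *; omega
          · intro j _ _; exact pow_nonneg hr0 j
  have hg := geom_aux hr0 hr1 a
  have hg2 := geom_aux hr0 hr1 N
  rw [h1]
  have e2 : (2:ℝ) / (1 - r) = 1/(1-r) + 1/(1-r) := by ring
  rw [e2]
  exact add_le_add hg (h2.trans hg2)

private lemma c_bound (l ε : ℝ) (hl : 0 < l) (hε : 0 < ε) :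
    2 / (1 - Real.exp (-(ε / ((1 + ε) * l)))) ≤ l * Real.exp (1 / l) * 2 * (1 + ε) / ε := by
  set t := ε / ((1 + ε) * l) with htdef
  have ht : 0 < t := by positivity
  have htl : t ≤ 1 / l := by
    rw [htdef, div_le_div_iff₀ (by positivity) hl]
    nlinarith
  have hden : 0 < 1 - Real.exp (-t) := by
    have : Real.exp (-t) < 1 := by rw [Real.exp_lt_one_iff]; linarith
    linarith
  have key : t ≤ Real.exp (1 / l) * (1 - Real.exp (-t)) := by
    have h1 : t + 1 ≤ Real.exp t := Real.add_one_le_exp t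
    have h2 : Real.exp (-(1/l)) ≤ Real.exp (-t) := Real.exp_le_exp.2 (by linarith)
    have h3 : t * Real.exp (-t) ≤ 1 - Real.exp (-t) := by
      have := Real.exp_pos (-t)
      have hmul : (t + 1) * Real.exp (-t) ≤ Real.exp t * Real.exp (-t) :=
        mul_le_mul_of_nonneg_right h1 this.le
      rw [← Real.exp_add, add_neg_cancel, Real.exp_zero] at hmul
      nlinarith
    have h4 : t * Real.exp (-(1/l)) ≤ t * Real.exp (-t) :=
      mul_le_mul_of_nonneg_left h2 ht.le
    have h5 : Real.exp (1/l) * (t * Real.exp (-(1/l))) = t := by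
      rw [mul_comm t, ← mul_assoc, ← Real.exp_add, add_neg_cancel, Real.exp_zero, one_mul]
    have h6 : Real.exp (1/l) * (t * Real.exp (-(1/l))) ≤ Real.exp (1/l) * (1 - Real.exp (-t)) :=
      mul_le_mul_of_nonneg_left (h4.trans h3) (Real.exp_pos _).le
    linarith [h5 ▸ h6]
  have hc : l * Real.exp (1 / l) * 2 * (1 + ε) / ε = 2 * Real.exp (1/l) / t := by
    rw [htdef]; field_simp
  rw [hc, div_le_div_iff₀ hden ht]
  nlinarith [Real.exp_pos (1/l)]

private lemma one_le_c (l ε : ℝ) (hl : 0 < l) (hε : 0 < ε) :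
    1 ≤ l * Real.exp (1 / l) * 2 * (1 + ε) / ε := by
  have h := c_bound l ε hl hε
  have ht : 0 < ε / ((1 + ε) * l) := by positivity
  have hlt : Real.exp (-(ε / ((1 + ε) * l))) < 1 := by
    rw [Real.exp_lt_one_iff]; linarith
  have hpos : 0 < 1 - Real.exp (-(ε / ((1 + ε) * l))) := by linarith
  have h2 : (2:ℝ) ≤ 2 / (1 - Real.exp (-(ε / ((1 + ε) * l)))) := by
    rw [le_div_iff₀ hpos]
    nlinarith [Real.exp_pos (-(ε / ((1 + ε) * l)))]
  linarith

private lemma step_bound (l ε : ℝ) (hl : 0 < l) (hε : 0 < ε) (N a b : ℕ)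
    (ha : 1 ≤ a) (ha' : a ≤ N) :
    ∑ x ∈ Icc 1 N, Real.exp (-(1/l) * |(a:ℝ) - x|) *
        Real.exp (-(1/((1+ε)*l)) * |(x:ℝ) - b|)
      ≤ (l * Real.exp (1 / l) * 2 * (1 + ε) / ε) *
          Real.exp (-(1/((1+ε)*l)) * |(a:ℝ) - b|) := by
  set s := 1/((1+ε)*l) with hsdef
  set t := ε / ((1 + ε) * l) with htdef
  have hs : 0 < s := by positivity
  have ht : 0 < t := by positivity
  have hts : 1/l = t + s := by rw [htdef, hsdef]; field_simp; ring
  have term : ∀ x ∈ Icc 1 N,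
      Real.exp (-(1/l) * |(a:ℝ) - x|) * Real.exp (-s * |(x:ℝ) - b|)
        ≤ Real.exp (-t * |(a:ℝ) - x|) * Real.exp (-s * |(a:ℝ) - b|) := by
    intro x _
    rw [← Real.exp_add, ← Real.exp_add]
    apply Real.exp_le_exp.2
    have tri : |(a:ℝ) - b| ≤ |(a:ℝ) - x| + |(x:ℝ) - b| := abs_sub_le _ _ _
    rw [hts]
    nlinarith
  calc ∑ x ∈ Icc 1 N, Real.exp (-(1/l) * |(a:ℝ) - x|) * Real.exp (-s * |(x:ℝ) - b|)
      ≤ ∑ x ∈ Icc 1 N, Real.exp (-t * |(a:ℝ) - x|) * Real.exp (-s * |(a:ℝ) - b|) :=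
        Finset.sum_le_sum term
    _ = (∑ x ∈ Icc 1 N, Real.exp (-t * |(a:ℝ) - x|)) * Real.exp (-s * |(a:ℝ) - b|) := by
        rw [Finset.sum_mul]
    _ ≤ (2 / (1 - Real.exp (-t))) * Real.exp (-s * |(a:ℝ) - b|) :=
        mul_le_mul_of_nonneg_right (sum_exp_abs_le t ht N a ha ha') (Real.exp_pos _).le
    _ ≤ (l * Real.exp (1 / l) * 2 * (1 + ε) / ε) * Real.exp (-s * |(a:ℝ) - b|) :=
        mul_le_mul_of_nonneg_right (c_bound l ε hl hε) (Real.exp_pos _).le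

private def pad (N k : ℕ) (x : Fin k → Fin N) (a b : ℕ) (j : ℕ) : ℝ :=
  if h : 1 ≤ j ∧ j ≤ k then ((x ⟨j - 1, by omega⟩ : ℕ) + 1 : ℝ)
  else if j = 0 then (a : ℝ) else (b : ℝ)

private lemma pad_cons (N k : ℕ) (y : Fin N) (x : Fin k → Fin N) (a b : ℕ) (j : ℕ) :
    pad N (k+1) (Fin.cons y x) a b (j+1) = pad N k x ((y:ℕ)+1) b j := by
  unfold pad
  by_cases h1 : 1 ≤ j ∧ j ≤ k
  · rw [dif_pos (show 1 ≤ j+1 ∧ j+1 ≤ k+1 by omega), dif_pos h1]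
    have hidx : (⟨j+1-1, by omega⟩ : Fin (k+1)) = Fin.succ ⟨j-1, by omega⟩ := by
      apply Fin.ext; simp; omega
    rw [hidx, Fin.cons_succ]
  · by_cases h0 : j = 0
    · subst h0
      rw [dif_pos (show 1 ≤ 0+1 ∧ 0+1 ≤ k+1 by omega), dif_neg h1, if_pos rfl]
      have hidx : (⟨0+1-1, by omega⟩ : Fin (k+1)) = 0 := rfl
      rw [hidx, Fin.cons_zero]
      push_cast; ring
    · rw [dif_neg (by omega), dif_neg h1, if_neg (by omega), if_neg h0]

private lemma pad_zero (N k : ℕ) (x : Fin k → Fin N) (a b : ℕ) :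
    pad N k x a b 0 = a := by
  unfold pad
  rw [dif_neg (by omega), if_pos rfl]

private lemma pad_last (N k : ℕ) (x : Fin k → Fin N) (a b : ℕ) (j : ℕ) (hj : k < j) :
    pad N k x a b j = b := by
  unfold pad
  rw [dif_neg (by omega), if_neg (by omega)]

private lemma fin_sum_eq_Icc (N : ℕ) (f : ℕ → ℝ) :
    ∑ y : Fin N, f ((y:ℕ)+1) = ∑ x ∈ Icc 1 N, f x := by
  apply Finset.sum_bij' (fun (y : Fin N) _ => (y:ℕ)+1)
    (fun (x : ℕ) (hx : x ∈ Icc 1 N) => (⟨x-1, by simp only [mem_Icc] at hx; omega⟩ : Fin N))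
  case hi => intro y _; simp only [mem_Icc]; omega
  case hj => intro x hx; exact mem_univ _
  case left_neg => intro y _; apply Fin.ext; simp
  case right_neg => intro x hx; simp only [mem_Icc] at hx; simp; omega
  case h => intro y _; rfl

private lemma path_aux (l ε : ℝ) (hl : 0 < l) (hε : 0 < ε) (N : ℕ) (hN : 1 ≤ N)
    (b : ℕ) (hb : 1 ≤ b) (hb' : b ≤ N) (k : ℕ) :
    ∀ a : ℕ, 1 ≤ a → a ≤ N →
    ∑ x : Fin k → Fin N, Real.exp (-(1/l) * ∑ i ∈ range (k+1),
        |pad N k x a b i - pad N k x a b (i+1)|)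
      ≤ (l * Real.exp (1/l) * 2 * (1+ε)/ε)^(k+1) *
          Real.exp (-(1/((1+ε)*l)) * |(a:ℝ) - (b:ℝ)|) := by
  set c := l * Real.exp (1/l) * 2 * (1+ε)/ε with hcdef
  have hc1 : 1 ≤ c := one_le_c l ε hl hε
  have hc0 : 0 ≤ c := by linarith
  induction k with
  | zero =>
    intro a ha ha'
    have huniq : ∑ x : Fin 0 → Fin N, Real.exp (-(1/l) * ∑ i ∈ range 1,
        |pad N 0 x a b i - pad N 0 x a b (i+1)|)
        = Real.exp (-(1/l) * |(a:ℝ) - (b:ℝ)|) := by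
      rw [Fintype.sum_unique]
      congr 1
      rw [Finset.sum_range_one, pad_zero, pad_last N 0 _ a b 1 (by omega)]
    rw [huniq, pow_one]
    have hle : Real.exp (-(1/l) * |(a:ℝ) - (b:ℝ)|)
        ≤ Real.exp (-(1/((1+ε)*l)) * |(a:ℝ) - (b:ℝ)|) := by
      apply Real.exp_le_exp.2
      have habs : 0 ≤ |(a:ℝ) - (b:ℝ)| := abs_nonneg _
      have : 1/((1+ε)*l) ≤ 1/l := by
        apply div_le_div_of_nonneg_left (by norm_num) hl
        nlinarith
      nlinarith
    calc Real.exp (-(1/l) * |(a:ℝ) - (b:ℝ)|)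
        ≤ Real.exp (-(1/((1+ε)*l)) * |(a:ℝ) - (b:ℝ)|) := hle
      _ ≤ c * Real.exp (-(1/((1+ε)*l)) * |(a:ℝ) - (b:ℝ)|) := by
          nlinarith [Real.exp_pos (-(1/((1+ε)*l)) * |(a:ℝ) - (b:ℝ)|)]
  | succ k ih =>
    intro a ha ha'
    have hsplit : ∀ (y : Fin N) (x : Fin k → Fin N),
        Real.exp (-(1/l) * ∑ i ∈ range (k+2),
          |pad N (k+1) (Fin.cons y x) a b i - pad N (k+1) (Fin.cons y x) a b (i+1)|)
        = Real.exp (-(1/l) * |(a:ℝ) - ((y:ℕ)+1 : ℕ)|) *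
          Real.exp (-(1/l) * ∑ i ∈ range (k+1),
            |pad N k x ((y:ℕ)+1) b i - pad N k x ((y:ℕ)+1) b (i+1)|) := by
      intro y x
      rw [Finset.sum_range_succ']
      have h0 : |pad N (k+1) (Fin.cons y x) a b 0 - pad N (k+1) (Fin.cons y x) a b (0+1)|
          = |(a:ℝ) - ((y:ℕ)+1 : ℕ)| := by
        rw [pad_zero, show (0+1 : ℕ) = 0+1 from rfl, pad_cons, pad_zero]
      have hsh : ∀ i ∈ range (k+1),
          |pad N (k+1) (Fin.cons y x) a b (i+1) - pad N (k+1) (Fin.cons y x) a b (i+1+1)|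
          = |pad N k x ((y:ℕ)+1) b i - pad N k x ((y:ℕ)+1) b (i+1)| := by
        intro i _
        rw [pad_cons, pad_cons]
      rw [Finset.sum_congr rfl hsh, h0, ← Real.exp_add]
      congr 1
      ring
    have hrw : ∑ x : Fin (k+1) → Fin N, Real.exp (-(1/l) * ∑ i ∈ range (k+2),
        |pad N (k+1) x a b i - pad N (k+1) x a b (i+1)|)
        = ∑ y : Fin N, Real.exp (-(1/l) * |(a:ℝ) - ((y:ℕ)+1 : ℕ)|) *
            (∑ x : Fin k → Fin N, Real.exp (-(1/l) * ∑ i ∈ range (k+1),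
              |pad N k x ((y:ℕ)+1) b i - pad N k x ((y:ℕ)+1) b (i+1)|)) := by
      rw [← Fintype.sum_equiv (Fin.consEquiv (fun _ : Fin (k+1) => Fin N))
        (fun p => Real.exp (-(1/l) * ∑ i ∈ range (k+2),
          |pad N (k+1) (Fin.cons p.1 p.2) a b i - pad N (k+1) (Fin.cons p.1 p.2) a b (i+1)|))
        _ (fun p => rfl)]
      rw [Fintype.sum_prod_type]
      apply Finset.sum_congr rfl
      intro y _
      rw [Finset.mul_sum]
      apply Finset.sum_congr rfl
      intro x _
      exact hsplit y x
    rw [hrw]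
    have hyb : ∀ y : Fin N, 1 ≤ (y:ℕ)+1 ∧ (y:ℕ)+1 ≤ N := fun y => ⟨by omega, y.isLt⟩
    calc ∑ y : Fin N, Real.exp (-(1/l) * |(a:ℝ) - ((y:ℕ)+1 : ℕ)|) *
            (∑ x : Fin k → Fin N, Real.exp (-(1/l) * ∑ i ∈ range (k+1),
              |pad N k x ((y:ℕ)+1) b i - pad N k x ((y:ℕ)+1) b (i+1)|))
        ≤ ∑ y : Fin N, Real.exp (-(1/l) * |(a:ℝ) - ((y:ℕ)+1 : ℕ)|) *
            (c^(k+1) * Real.exp (-(1/((1+ε)*l)) * |(((y:ℕ)+1 : ℕ):ℝ) - (b:ℝ)|)) := by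
          apply Finset.sum_le_sum
          intro y _
          exact mul_le_mul_of_nonneg_left (ih ((y:ℕ)+1) (hyb y).1 (hyb y).2)
            (Real.exp_pos _).le
      _ = c^(k+1) * ∑ y : Fin N, Real.exp (-(1/l) * |(a:ℝ) - ((y:ℕ)+1 : ℕ)|) *
            Real.exp (-(1/((1+ε)*l)) * |(((y:ℕ)+1 : ℕ):ℝ) - (b:ℝ)|) := by
          rw [Finset.mul_sum]
          apply Finset.sum_congr rfl
          intro y _
          ring
      _ ≤ c^(k+1) * (c * Real.exp (-(1/((1+ε)*l)) * |(a:ℝ) - (b:ℝ)|)) := by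
          apply mul_le_mul_of_nonneg_left _ (pow_nonneg hc0 _)
          rw [fin_sum_eq_Icc N (fun z => Real.exp (-(1/l) * |(a:ℝ) - (z:ℕ)|) *
            Real.exp (-(1/((1+ε)*l)) * |((z:ℕ):ℝ) - (b:ℝ)|))]
          exact step_bound l ε hl hε N a b ha ha'
      _ = c^(k+2) * Real.exp (-(1/((1+ε)*l)) * |(a:ℝ) - (b:ℝ)|) := by
          rw [← mul_assoc, ← pow_succ]

/-- Path sum estimate: with `c(l,ε) = 2 l e^{1/l} (1+ε)/ε`, for all `k ≥ 0`, `N ≥ 1`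
and `a, b ∈ {1,…,N}`,
`∑_{x₁,…,x_k=1}^N exp(-(1/l)(|a-x₁|+⋯+|x_k-b|)) ≤ c(l,ε)^{k+1} e^{-|a-b|/((1+ε)l)}`. -/
theorem path_sum_bound (l ε : ℝ) (hl : 0 < l) (hε : 0 < ε)
    (k N : ℕ) (hN : 1 ≤ N) (a b : ℕ) (ha : 1 ≤ a) (ha' : a ≤ N)
    (hb : 1 ≤ b) (hb' : b ≤ N) :
    (∑ x : Fin k → Fin N,
      Real.exp (-(1 / l) *
        (∑ i ∈ Finset.range (k + 1),
          |(fun j : ℕ => if h : 1 ≤ j ∧ j ≤ k then ((x ⟨j - 1, by omega⟩ : ℕ) + 1 : ℝ)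
              else if j = 0 then (a : ℝ) else (b : ℝ)) i
            - (fun j : ℕ => if h : 1 ≤ j ∧ j ≤ k then ((x ⟨j - 1, by omega⟩ : ℕ) + 1 : ℝ)
              else if j = 0 then (a : ℝ) else (b : ℝ)) (i + 1)|)))
      ≤ (l * Real.exp (1 / l) * 2 * (1 + ε) / ε) ^ (k + 1) *
          Real.exp (-|(a : ℝ) - (b : ℝ)| / ((1 + ε) * l)) := by
  have h := path_aux l ε hl hε N hN b hb hb' k a ha ha'
  have hexp : Real.exp (-(1/((1+ε)*l)) * |(a:ℝ) - (b:ℝ)|)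
      = Real.exp (-|(a : ℝ) - (b : ℝ)| / ((1 + ε) * l)) := by
    congr 1; ring
  rw [hexp] at h
  exact h
end

section
/- Let 𝒮 be a linear operator on N×N complex matrices with finite operator norm ‖𝒮‖, and define matrices C_k by C_0 = I and C_k = ∑_{m=0}^{k-1} C_{k-1-m} 𝒮(C_m). If ‖C_k‖ ≤ C·R^k for all k (with constants C ≥ 1, R > 0, and ‖·‖ a submultiplicative matrix norm), then for every z ∈ ℂ with |z|² > R the series M(z) = -z^{-1} ∑_{k=0}^∞ C_k z^{-2k} converges absolutely and satisfies the Matrix Dyson Equation -M(z)^{-1} = z·I + 𝒮(M(z)), equivalently I + (z·I + 𝒮(M(z)))·M(z) = 0. -/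
open Finset

attribute [local instance] Matrix.linftyOpNormedRing Matrix.linftyOpNormedAlgebra

/-- If `C_0 = I`, `C_k = ∑_{m<k} C_{k-1-m} 𝒮(C_m)` and `‖C_k‖ ≤ C R^k` for a
submultiplicative matrix norm, then for `|z|² > R` the series
`M(z) = -z⁻¹ ∑ C_k z^{-2k}` converges absolutely and satisfies the Matrix Dyson
Equation `I + (z·I + 𝒮(M(z)))·M(z) = 0`. -/
theorem MDE_solution_large_z (N : ℕ)
    (S : Matrix (Fin N) (Fin N) ℂ →L[ℂ] Matrix (Fin N) (Fin N) ℂ)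
    (Ck : ℕ → Matrix (Fin N) (Fin N) ℂ)
    (hC0 : Ck 0 = 1)
    (hrec : ∀ k : ℕ, 1 ≤ k → Ck k = ∑ m ∈ Finset.range k, Ck (k - 1 - m) * S (Ck m))
    (C R : ℝ) (hC : 1 ≤ C) (hR : 0 < R)
    (hbound : ∀ k : ℕ, ‖Ck k‖ ≤ C * R ^ k)
    (z : ℂ) (hz : R < ‖z‖ ^ 2) :
    (Summable fun k : ℕ => ‖(-z⁻¹ * z ^ (-(2 * k : ℤ))) • Ck k‖) ∧
    ∃ M : Matrix (Fin N) (Fin N) ℂ,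
      HasSum (fun k : ℕ => (-z⁻¹ * z ^ (-(2 * k : ℤ))) • Ck k) M ∧
      (1 : Matrix (Fin N) (Fin N) ℂ) + (z • (1 : Matrix (Fin N) (Fin N) ℂ) + S M) * M = 0 := by
  have hz0 : z ≠ 0 := by
    intro h
    rw [h] at hz; simp at hz; linarith
  have hznorm : (0:ℝ) < ‖z‖ := norm_pos_iff.mpr hz0
  set w : ℂ := z ^ (-2 : ℤ) with hw
  have hwk : ∀ k : ℕ, z ^ (-(2 * k : ℤ)) = w ^ k := by
    intro k
    rw [hw, ← zpow_natCast (z ^ (-2:ℤ)) k, ← zpow_mul]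
    ring_nf
  have hnw : ‖w‖ = (‖z‖ ^ 2)⁻¹ := by
    rw [hw, norm_zpow]
    norm_num
  have hnw0 : (0:ℝ) < ‖w‖ := by rw [hnw]; positivity
  set r : ℝ := ‖w‖ * R with hr
  have hr0 : 0 ≤ r := by positivity
  have hr1 : r < 1 := by
    rw [hr, hnw]
    rw [inv_mul_lt_iff₀ (by positivity)]
    simpa using hz
  have hgeo : Summable fun k : ℕ => C * r ^ k :=
    (summable_geometric_of_lt_one hr0 hr1).mul_left C
  -- the two basic series
  set f : ℕ → Matrix (Fin N) (Fin N) ℂ := fun k => w ^ k • Ck k with hf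
  set g : ℕ → Matrix (Fin N) (Fin N) ℂ := fun k => w ^ k • S (Ck k) with hg
  have hfb : ∀ k, ‖f k‖ ≤ C * r ^ k := by
    intro k
    rw [hf]
    simp only []
    rw [norm_smul, norm_pow]
    calc ‖w‖ ^ k * ‖Ck k‖ ≤ ‖w‖ ^ k * (C * R ^ k) := by
          apply mul_le_mul_of_nonneg_left (hbound k) (by positivity)
      _ = C * r ^ k := by rw [hr, mul_pow]; ring
  have hfsum : Summable fun k => ‖f k‖ :=
    Summable.of_nonneg_of_le (fun k => norm_nonneg _) hfb hgeo
  obtain ⟨K, hK0, hK⟩ := SemilinearMapClass.bound_of_continuous (S : Matrix (Fin N) (Fin N) ℂ →ₗ[ℂ] Matrix (Fin N) (Fin N) ℂ) S.continuous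
  have hgb : ∀ k, ‖g k‖ ≤ K * (C * r ^ k) := by
    intro k
    rw [hg]
    simp only []
    rw [norm_smul, norm_pow]
    calc ‖w‖ ^ k * ‖S (Ck k)‖ ≤ ‖w‖ ^ k * (K * ‖Ck k‖) := by
          apply mul_le_mul_of_nonneg_left (hK _) (by positivity)
      _ ≤ K * (C * (‖w‖ ^ k * R ^ k)) := by
          have := hbound k
          have h1 : ‖w‖ ^ k * (K * ‖Ck k‖) ≤ ‖w‖ ^ k * (K * (C * R ^ k)) := by
            apply mul_le_mul_of_nonneg_left _ (by positivity)
            exact mul_le_mul_of_nonneg_left this hK0.le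
          linarith [h1]
      _ = K * (C * r ^ k) := by rw [hr, mul_pow]
  have hgsum : Summable fun k => ‖g k‖ :=
    Summable.of_nonneg_of_le (fun k => norm_nonneg _) hgb (hgeo.mul_left K)
  have hfs : Summable f := hfsum.of_norm
  have hgs : Summable g := hgsum.of_norm
  set A : Matrix (Fin N) (Fin N) ℂ := ∑' k, f k with hA
  have hAsum : HasSum f A := hfs.hasSum
  have hSA : S A = ∑' k, g k := by
    rw [hA, S.map_tsum hfs]
    congr 1
    funext k
    rw [hf, hg]
    simp [map_smul]
  -- key: summability goal
  have hmul : ∀ k : ℕ, (-z⁻¹ * z ^ (-(2 * k : ℤ))) • Ck k = (-z⁻¹) • f k := by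
    intro k
    rw [hwk k, hf, mul_smul]
  constructor
  · apply Summable.of_nonneg_of_le (fun k => norm_nonneg _) _
      ((hfsum.mul_left ‖(-z⁻¹ : ℂ)‖))
    intro k
    rw [hmul k, norm_smul]
  · refine ⟨(-z⁻¹) • A, ?_, ?_⟩
    · have := hAsum.const_smul (-z⁻¹ : ℂ)
      convert this using 1
      funext k
      exact hmul k
    · -- Cauchy product identity
      have hcauchy : A * S A = ∑' n, ∑ k ∈ range (n + 1), f k * g (n - k) := by
        rw [hA, hSA]
        exact tsum_mul_tsum_eq_tsum_sum_range_of_summable_norm hfsum hgsum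
      have hinner : ∀ n : ℕ, ∑ k ∈ range (n + 1), f k * g (n - k) = w ^ n • Ck (n + 1) := by
        intro n
        have h1 : ∀ k ∈ range (n + 1), f k * g (n - k)
            = w ^ n • (Ck k * S (Ck (n - k))) := by
          intro k hk
          rw [mem_range] at hk
          rw [hf, hg]
          simp only []
          rw [smul_mul_smul_comm, ← pow_add]
          congr 2
          omega
        rw [Finset.sum_congr rfl h1, ← Finset.smul_sum]
        congr 1
        have h2 := hrec (n + 1) (by omega)
        rw [h2]
        conv_rhs => rw [← Finset.sum_range_reflect (fun m => Ck (n + 1 - 1 - m) * S (Ck m)) (n + 1)]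
        apply Finset.sum_congr rfl
        intro k hk
        rw [mem_range] at hk
        have e4 : n + 1 - 1 - k = n - k := by omega
        have e5 : n + 1 - 1 - (n - k) = k := by omega
        simp only [e4, e5]
      have hshift : A = 1 + w • (A * S A) := by
        rw [hcauchy]
        have h3 : (∑' n, ∑ k ∈ range (n + 1), f k * g (n - k)) = ∑' n, w ^ n • Ck (n + 1) := by
          congr 1; funext n; exact hinner n
        rw [h3]
        have h4 : A = f 0 + ∑' n, f (n + 1) := by
          rw [hA]; exact hfs.tsum_eq_zero_add
        have h5 : f 0 = 1 := by rw [hf]; simp [hC0]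
        have h6 : w • ∑' n, w ^ n • Ck (n + 1) = ∑' n, f (n + 1) := by
          rw [← tsum_const_smul'']
          congr 1; funext n
          rw [hf]
          simp only []
          rw [smul_smul, ← pow_succ']
        rw [h6, ← h5, ← h4]
      -- final algebra
      set M : Matrix (Fin N) (Fin N) ℂ := (-z⁻¹) • A with hM
      have hSM : S M = (-z⁻¹) • S A := by rw [hM, map_smul]
      have hleft : M * (z • (1 : Matrix (Fin N) (Fin N) ℂ) + S M) = -1 := by
        rw [hSM, hM]
        rw [mul_add]
        have e1 : ((-z⁻¹) • A) * (z • (1 : Matrix (Fin N) (Fin N) ℂ)) = -A := by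
          rw [smul_mul_smul_comm]
          rw [mul_one]
          have : -z⁻¹ * z = -1 := by field_simp
          rw [this, neg_one_smul]
        have e2 : ((-z⁻¹) • A) * ((-z⁻¹) • S A) = w • (A * S A) := by
          rw [smul_mul_smul_comm]
          congr 1
          have hwinv : w = (z ^ 2)⁻¹ := by
            rw [hw, zpow_neg]
            norm_num
          rw [hwinv, neg_mul_neg, ← mul_inv, sq]
        rw [e1, e2]
        have h7 : w • (A * S A) = A - 1 := by
          rw [eq_sub_iff_add_eq, add_comm]
          exact hshift.symm
        rw [h7]
        abel
      have hinv : M * (-(z • (1 : Matrix (Fin N) (Fin N) ℂ) + S M)) = 1 := by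
        rw [mul_neg, hleft, neg_neg]
      have hcomm := mul_eq_one_comm.mp hinv
      rw [neg_mul] at hcomm
      have : (z • (1 : Matrix (Fin N) (Fin N) ℂ) + S M) * M = -1 := by
        rw [← neg_neg ((z • (1 : Matrix (Fin N) (Fin N) ℂ) + S M) * M), hcomm]
      rw [this]
      abel
end
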